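/- Let 1 < p < ∞. For every z ∈ [0,π_p], ∫₀^z |cos_p(t)|^p dt = (1/p)·((p−1)·z + |cos_p(z)|^{p−2}·cos_p(z)·sin_p(z)). -/

import Mathlib

/-- `arcsin_p x = ∫₀ˣ (1 - tᵖ)^(-1/p) dt`. -/
noncomputable def arcsinP (p x : ℝ) : ℝ := ∫ t in (0:ℝ)..x, (1 - t ^ p) ^ (-(1 / p))

/-- The generalized π: `π_p = 2 arcsin_p 1`. -/
noncomputable def piP (p : ℝ) : ℝ := 2 * arcsinP p 1

/-- `sin_p` on `[0, π_p/2]`, defined as the inverse of `arcsin_p : [0,1] → [0, π_p/2]`. -/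
noncomputable def sinPHalf (p : ℝ) : ℝ → ℝ := Function.invFunOn (arcsinP p) (Set.Icc 0 1)

/-- `sin_p` on `[0, π_p]`, extended by `sin_p x = sin_p (π_p - x)`. -/
noncomputable def sinP (p x : ℝ) : ℝ :=
  if x ≤ piP p / 2 then sinPHalf p x else sinPHalf p (piP p - x)

/-- `cos_p x = (1 - sin_p x ^ p)^(1/p)` on `[0, π_p/2]`, with minus sign on `[π_p/2, π_p]`. -/
noncomputable def cosP (p x : ℝ) : ℝ :=
  if x ≤ piP p / 2 then (1 - sinP p x ^ p) ^ (1 / p)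
  else -((1 - sinP p x ^ p) ^ (1 / p))

/-- `cot_p x = cos_p x / sin_p x`. -/
noncomputable def cotP (p x : ℝ) : ℝ := cosP p x / sinP p x

/-!
On `[0, π_p/2]`, `sin_p` inverts `arcsin_p`, so `sin_p' = (1 - sin_p^p)^{1/p} = cos_p` and
`|cos_p|^p = 1 - sin_p^p`. There the right-hand side equals
`(1/p)((p - 1) z + (1 - sin_p^p)^{(p-1)/p} sin_p)`, whose derivative is `1 - sin_p^p`, so the
identity on the first half is the fundamental theorem of calculus. On `[π_p/2, π_p]`, `|cos_p|^p`
is symmetric about `π_p/2` while `cos_p` changes sign and `sin_p` does not, which reduces the second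
half to the first.
-/

open Set Function MeasureTheory intervalIntegral

theorem StrictMonoOn.continuousOn_invFunOn {α β : Type*} [ConditionallyCompleteLinearOrder α]
    [TopologicalSpace α] [OrderTopology α] [DenselyOrdered α] [ConditionallyCompleteLinearOrder β]
    [TopologicalSpace β] [OrderTopology β] {f : α → β} {a b : α} (hab : a ≤ b)
    (hf : StrictMonoOn f (Icc a b)) (hc : ContinuousOn f (Icc a b)) :
    ContinuousOn (invFunOn f (Icc a b)) (Icc (f a) (f b)) := by
  have himg : f '' Icc a b = Icc (f a) (f b) := hc.image_Icc_of_monotoneOn hab hf.monotoneOn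
  rw [← himg]
  have : OrdConnected (f '' Icc a b) := himg ▸ ordConnected_Icc
  set e := hf.orderIso f (Icc a b)
  rw [continuousOn_iff_continuous_domRestrict]
  convert continuous_subtype_val.comp e.symm.continuous
  funext y
  have hy : f (e.symm y) = y := congrArg Subtype.val (e.apply_symm_apply y)
  exact hf.injOn (invFunOn_mem (hy ▸ ⟨_, (e.symm y).2, rfl⟩)) (e.symm y).2
    ((invFunOn_eq (hy ▸ ⟨_, (e.symm y).2, rfl⟩)).trans hy.symm)

theorem intervalIntegrable_one_sub_rpow_rpow_neg {p q : ℝ} (hp : 1 ≤ p) (hq : 0 ≤ q)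
    (hq1 : q < 1) : IntervalIntegrable (fun t : ℝ => (1 - t ^ p) ^ (-q)) volume 0 1 := by
  have hdom : IntervalIntegrable (fun t : ℝ => (1 - t) ^ (-q)) volume 0 1 := by
    simpa using
      ((intervalIntegrable_rpow' (a := 0) (b := 1) (r := -q) (by linarith)).comp_sub_left 1).symm
  refine hdom.mono_fun' (Measurable.aestronglyMeasurable (by fun_prop)) ?_
  rw [Filter.EventuallyLE, ae_restrict_iff' measurableSet_uIoc, uIoc_of_le zero_le_one]
  refine Filter.Eventually.of_forall fun t ⟨ht0, ht1⟩ => ?_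
  have htp : t ^ p ≤ t := Real.rpow_le_self_of_le_one ht0.le ht1 hp
  rw [Real.norm_of_nonneg (Real.rpow_nonneg (by linarith) _)]
  rcases ht1.eq_or_lt with rfl | ht1
  · simp
  · exact Real.rpow_le_rpow_of_nonpos (by linarith) (by linarith) (by linarith)

theorem integral_eq_two_mul_sub_of_symm {f : ℝ → ℝ} {c z : ℝ} (hcz : c ≤ z) (hz : z ≤ 2 * c)
    (hf : IntervalIntegrable f volume 0 c) (hsymm : ∀ t ∈ Ioc c z, f (2 * c - t) = f t) :
    ∫ t in 0..z, f t = 2 * (∫ t in 0..c, f t) - ∫ t in 0..(2 * c - z), f t := by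
  have hsymm' : EqOn (fun t => f (2 * c - t)) f (uIoc c z) := by
    rw [uIoc_of_le hcz]; exact hsymm
  have hmem : 2 * c - z ∈ uIcc 0 c := by
    rw [uIcc_of_le (by linarith)]; constructor <;> linarith
  have hf' : IntervalIntegrable f volume 0 (2 * c - z) := hf.mono_set (uIcc_subset_uIcc_left hmem)
  have hcz_int : IntervalIntegrable f volume c z := by
    have h := (hf.mono_set (uIcc_subset_uIcc_right hmem)).comp_sub_left (2 * c)
    rw [sub_sub_cancel, show 2 * c - c = c by ring] at h
    exact (intervalIntegrable_congr hsymm').mp h.symm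
  have hrefl : ∫ t in c..z, f t = ∫ t in (2 * c - z)..c, f t := by
    rw [← integral_congr_ae (ae_of_all _ fun t ht => hsymm' ht), integral_comp_sub_left,
      two_mul, add_sub_cancel_right]
  rw [← integral_add_adjacent_intervals hf hcz_int, hrefl, ← integral_interval_sub_left hf hf']
  ring

section

variable {p : ℝ}

theorem arcsinP_zero : arcsinP p 0 = 0 := integral_same

theorem piP_div_two : piP p / 2 = arcsinP p 1 := by rw [piP]; ring

theorem intervalIntegrable_arcsinP_integrand (hp : 1 < p) :
    IntervalIntegrable (fun t : ℝ => (1 - t ^ p) ^ (-(1 / p))) volume 0 1 :=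
  intervalIntegrable_one_sub_rpow_rpow_neg hp.le (by positivity) ((div_lt_one (by linarith)).2 hp)

theorem arcsinP_continuousOn (hp : 1 < p) : ContinuousOn (arcsinP p) (Icc 0 1) := by
  have h : IntegrableOn (fun t : ℝ => (1 - t ^ p) ^ (-(1 / p))) (uIcc 0 1) := by
    rw [uIcc_of_le zero_le_one, ← intervalIntegrable_iff_integrableOn_Icc_of_le zero_le_one]
    exact intervalIntegrable_arcsinP_integrand hp
  rw [← uIcc_of_le zero_le_one]
  exact continuousOn_primitive_interval h

theorem hasDerivAt_arcsinP (hp : 1 < p) {x : ℝ} (hx : x ∈ Ioo 0 1) :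
    HasDerivAt (arcsinP p) ((1 - x ^ p) ^ (-(1 / p))) x := by
  have hx_p : 0 < 1 - x ^ p := sub_pos.2 (Real.rpow_lt_one hx.1.le hx.2 (by linarith))
  refine integral_hasDerivAt_right
    ((intervalIntegrable_arcsinP_integrand hp).mono_set
      (uIcc_subset_uIcc_left (by rw [uIcc_of_le zero_le_one]; exact Ioo_subset_Icc_self hx)))
    (Measurable.aestronglyMeasurable (by fun_prop)).stronglyMeasurableAtFilter ?_
  exact (continuousAt_const.sub (continuousAt_id.rpow_const (Or.inr (by linarith)))).rpow_const
    (Or.inl hx_p.ne')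

theorem arcsinP_strictMonoOn (hp : 1 < p) : StrictMonoOn (arcsinP p) (Icc 0 1) := by
  refine strictMonoOn_of_deriv_pos (convex_Icc 0 1) (arcsinP_continuousOn hp) fun x hx => ?_
  rw [interior_Icc] at hx
  rw [(hasDerivAt_arcsinP hp hx).deriv]
  exact Real.rpow_pos_of_pos (sub_pos.2 (Real.rpow_lt_one hx.1.le hx.2 (by linarith))) _

theorem arcsinP_bijOn (hp : 1 < p) : BijOn (arcsinP p) (Icc 0 1) (Icc 0 (piP p / 2)) := by
  have himg := (arcsinP_continuousOn hp).image_Icc_of_monotoneOn zero_le_one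
    (arcsinP_strictMonoOn hp).monotoneOn
  rw [arcsinP_zero, ← piP_div_two] at himg
  exact himg ▸ (arcsinP_strictMonoOn hp).injOn.bijOn_image

theorem piP_pos (hp : 1 < p) : 0 < piP p := by
  have h := arcsinP_strictMonoOn hp (left_mem_Icc.2 zero_le_one) (right_mem_Icc.2 zero_le_one)
    one_pos
  rw [arcsinP_zero] at h
  rw [piP]
  positivity

theorem sinPHalf_continuousOn (hp : 1 < p) : ContinuousOn (sinPHalf p) (Icc 0 (piP p / 2)) := by
  have h := (arcsinP_strictMonoOn hp).continuousOn_invFunOn zero_le_one (arcsinP_continuousOn hp)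
  rwa [arcsinP_zero, ← piP_div_two] at h

theorem sinP_of_le {z : ℝ} (hz : z ≤ piP p / 2) : sinP p z = sinPHalf p z := if_pos hz

theorem cosP_of_le {z : ℝ} (hz : z ≤ piP p / 2) : cosP p z = (1 - sinP p z ^ p) ^ (1 / p) :=
  if_pos hz

theorem sinP_continuousOn (hp : 1 < p) : ContinuousOn (sinP p) (Icc 0 (piP p / 2)) :=
  (sinPHalf_continuousOn hp).congr fun _ hz => sinP_of_le hz.2

theorem sinP_mem_Icc (hp : 1 < p) {z : ℝ} (hz : z ∈ Icc 0 (piP p / 2)) : sinP p z ∈ Icc 0 1 :=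
  sinP_of_le hz.2 ▸ (arcsinP_bijOn hp).surjOn.mapsTo_invFunOn hz

theorem arcsinP_sinP (hp : 1 < p) {z : ℝ} (hz : z ∈ Icc 0 (piP p / 2)) :
    arcsinP p (sinP p z) = z :=
  sinP_of_le hz.2 ▸ (arcsinP_bijOn hp).invOn_invFunOn.2 hz

theorem sinP_arcsinP (hp : 1 < p) {x : ℝ} (hx : x ∈ Icc 0 1) : sinP p (arcsinP p x) = x := by
  rw [sinP_of_le ((arcsinP_bijOn hp).mapsTo hx).2]
  exact (arcsinP_bijOn hp).invOn_invFunOn.1 hx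

theorem sinP_zero (hp : 1 < p) : sinP p 0 = 0 := by
  simpa only [arcsinP_zero] using sinP_arcsinP hp (left_mem_Icc.2 zero_le_one)

theorem sinP_piP_div_two (hp : 1 < p) : sinP p (piP p / 2) = 1 := by
  simpa only [← piP_div_two] using sinP_arcsinP hp (right_mem_Icc.2 zero_le_one)

theorem sinP_mem_Ioo (hp : 1 < p) {z : ℝ} (hz : z ∈ Ioo 0 (piP p / 2)) : sinP p z ∈ Ioo 0 1 := by
  obtain ⟨h0, h1⟩ := sinP_mem_Icc hp (Ioo_subset_Icc_self hz)
  have harc := arcsinP_sinP hp (Ioo_subset_Icc_self hz)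
  refine ⟨h0.lt_of_ne ?_, h1.lt_of_ne ?_⟩ <;> rintro h
  · rw [← h, arcsinP_zero] at harc; exact hz.1.ne harc
  · rw [h, ← piP_div_two] at harc; exact hz.2.ne' harc

theorem continuousOn_one_sub_sinP_rpow (hp : 1 < p) :
    ContinuousOn (fun z => 1 - sinP p z ^ p) (Icc 0 (piP p / 2)) :=
  continuousOn_const.sub ((sinP_continuousOn hp).rpow_const fun _ _ => Or.inr (by linarith))

theorem one_sub_sinP_rpow_nonneg (hp : 1 < p) {z : ℝ} (hz : z ∈ Icc 0 (piP p / 2)) :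
    0 ≤ 1 - sinP p z ^ p := by
  obtain ⟨h0, h1⟩ := sinP_mem_Icc hp hz
  linarith [Real.rpow_le_one h0 h1 (by linarith : 0 ≤ p)]

theorem hasDerivAt_sinP (hp : 1 < p) {z : ℝ} (hz : z ∈ Ioo 0 (piP p / 2)) :
    HasDerivAt (sinP p) (cosP p z) z := by
  have hs := sinP_mem_Ioo hp hz
  have hpos : 0 < 1 - sinP p z ^ p := sub_pos.2 (Real.rpow_lt_one hs.1.le hs.2 (by linarith))
  have h := (hasDerivAt_arcsinP hp hs).of_local_left_inverse
    ((sinP_continuousOn hp).continuousAt (Icc_mem_nhds hz.1 hz.2))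
    (Real.rpow_pos_of_pos hpos _).ne'
    (Filter.eventually_of_mem (Ioo_mem_nhds hz.1 hz.2) fun y hy =>
      arcsinP_sinP hp (Ioo_subset_Icc_self hy))
  rwa [← Real.rpow_neg hpos.le, neg_neg, ← cosP_of_le hz.2.le] at h

theorem cosP_piP_div_two (hp : 1 < p) : cosP p (piP p / 2) = 0 := by
  rw [cosP_of_le le_rfl, sinP_piP_div_two hp, Real.one_rpow, sub_self,
    Real.zero_rpow (by positivity)]

theorem abs_cosP_rpow (hp : 1 < p) {z : ℝ} (hz : z ∈ Icc 0 (piP p / 2)) :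
    |cosP p z| ^ p = 1 - sinP p z ^ p := by
  have hu := one_sub_sinP_rpow_nonneg hp hz
  rw [cosP_of_le hz.2, abs_of_nonneg (Real.rpow_nonneg hu _), ← Real.rpow_mul hu,
    one_div_mul_cancel (by positivity), Real.rpow_one]

theorem abs_cosP_rpow_sub_two_mul_cosP (hp : 1 < p) {z : ℝ} (hz : z ∈ Icc 0 (piP p / 2)) :
    |cosP p z| ^ (p - 2) * cosP p z = (1 - sinP p z ^ p) ^ ((p - 1) / p) := by
  have hu := one_sub_sinP_rpow_nonneg hp hz
  rw [cosP_of_le hz.2, abs_of_nonneg (Real.rpow_nonneg hu _),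
    ← Real.rpow_add_one' (Real.rpow_nonneg hu _) (by linarith), ← Real.rpow_mul hu]
  congr 1
  ring

theorem sinP_piP_sub {z : ℝ} (hz : piP p / 2 < z) : sinP p (piP p - z) = sinP p z := by
  rw [sinP, if_pos (by linarith), sinP, if_neg hz.not_ge]

theorem cosP_piP_sub {z : ℝ} (hz : piP p / 2 < z) : cosP p (piP p - z) = -cosP p z := by
  rw [cosP, if_pos (by linarith), cosP, if_neg hz.not_ge, sinP_piP_sub hz, neg_neg]

/-- The right-hand side of the theorem on `[0, π_p/2]`, where
`|cos_p|^{p-2} cos_p = (1 - sin_p^p)^{(p-1)/p}`. -/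
noncomputable def cosPPowPrimitive (p z : ℝ) : ℝ :=
  1 / p * ((p - 1) * z + (1 - sinP p z ^ p) ^ ((p - 1) / p) * sinP p z)

theorem cosPPowPrimitive_zero (hp : 1 < p) : cosPPowPrimitive p 0 = 0 := by
  simp [cosPPowPrimitive, sinP_zero hp]

theorem continuousOn_cosPPowPrimitive (hp : 1 < p) :
    ContinuousOn (cosPPowPrimitive p) (Icc 0 (piP p / 2)) := by
  refine continuousOn_const.mul ((continuousOn_const.mul continuousOn_id).add
    (ContinuousOn.mul ?_ (sinP_continuousOn hp)))
  exact (continuousOn_one_sub_sinP_rpow hp).rpow_const fun _ _ =>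
    Or.inr (div_nonneg (by linarith) (by linarith))

theorem hasDerivAt_cosPPowPrimitive (hp : 1 < p) {z : ℝ} (hz : z ∈ Ioo 0 (piP p / 2)) :
    HasDerivAt (cosPPowPrimitive p) (1 - sinP p z ^ p) z := by
  have hs := sinP_mem_Ioo hp hz
  have hu : 0 < 1 - sinP p z ^ p := sub_pos.2 (Real.rpow_lt_one hs.1.le hs.2 (by linarith))
  have hsin := hasDerivAt_sinP hp hz
  rw [cosP_of_le hz.2.le] at hsin
  have hpow := ((hsin.rpow_const (p := p) (Or.inl hs.1.ne')).const_sub 1).rpow_const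
    (p := (p - 1) / p) (Or.inl hu.ne')
  rw [show (p - 1) / p - 1 = -(1 / p) by field_simp; ring] at hpow
  refine HasDerivAt.congr_deriv (f := cosPPowPrimitive p)
    ((((hasDerivAt_id z).const_mul (p - 1)).add (hpow.mul hsin)).const_mul (1 / p)) ?_
  set s := sinP p z
  set u := 1 - s ^ p with hu_def
  have e1 : u ^ (1 / p) * u ^ (-(1 / p)) = 1 := by
    rw [← Real.rpow_add hu, add_neg_cancel, Real.rpow_zero]
  have e2 : u ^ ((p - 1) / p) * u ^ (1 / p) = u := by
    rw [← Real.rpow_add hu, show (p - 1) / p + 1 / p = 1 by field_simp; ring, Real.rpow_one]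
  have e3 : s ^ (p - 1) * s = s ^ p := by
    rw [← Real.rpow_add_one hs.1.ne', sub_add_cancel]
  field_simp
  linear_combination -(p - 1) * (s ^ (p - 1) * s) * e1 - (p - 1) * e3 + e2 - (p - 1) * hu_def

theorem intervalIntegrable_abs_cosP_rpow (hp : 1 < p) :
    IntervalIntegrable (fun t => |cosP p t| ^ p) volume 0 (piP p / 2) := by
  have hc : 0 ≤ piP p / 2 := by linarith [piP_pos hp]
  refine (intervalIntegrable_congr fun t ht => ?_).2
    ((continuousOn_one_sub_sinP_rpow hp).intervalIntegrable_of_Icc hc)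
  rw [uIoc_of_le hc] at ht
  exact abs_cosP_rpow hp (Ioc_subset_Icc_self ht)

theorem integral_abs_cosP_rpow_of_le (hp : 1 < p) {z : ℝ} (hz : z ∈ Icc 0 (piP p / 2)) :
    (∫ t in (0:ℝ)..z, |cosP p t| ^ p) =
      (1 / p) * ((p - 1) * z + |cosP p z| ^ (p - 2) * cosP p z * sinP p z) := by
  have hsub : Icc 0 z ⊆ Icc 0 (piP p / 2) := Icc_subset_Icc_right hz.2
  calc (∫ t in (0:ℝ)..z, |cosP p t| ^ p) = ∫ t in (0:ℝ)..z, 1 - sinP p t ^ p :=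
        integral_congr fun t ht => abs_cosP_rpow hp (hsub (uIcc_of_le hz.1 ▸ ht))
    _ = cosPPowPrimitive p z - cosPPowPrimitive p 0 :=
        integral_eq_sub_of_hasDerivAt_of_le hz.1 ((continuousOn_cosPPowPrimitive hp).mono hsub)
          (fun t ht => hasDerivAt_cosPPowPrimitive hp ⟨ht.1, ht.2.trans_le hz.2⟩)
          (((continuousOn_one_sub_sinP_rpow hp).mono hsub).intervalIntegrable_of_Icc hz.1)
    _ = _ := by
        rw [cosPPowPrimitive_zero hp, sub_zero, cosPPowPrimitive,
          abs_cosP_rpow_sub_two_mul_cosP hp hz]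

end

/-- `∫₀^z |cos_p t|^p dt = (1/p)((p-1) z + |cos_p z|^(p-2) cos_p z · sin_p z)` for
`z ∈ [0, π_p]`. -/
theorem integral_abs_cosP_rpow (p : ℝ) (hp : 1 < p) (z : ℝ) (hz : z ∈ Set.Icc 0 (piP p)) :
    (∫ t in (0:ℝ)..z, |cosP p t| ^ p) =
      (1 / p) * ((p - 1) * z + |cosP p z| ^ (p - 2) * cosP p z * sinP p z) := by
  obtain ⟨hz0, hzπ⟩ := hz
  rcases le_or_gt z (piP p / 2) with hzc | hzc
  · exact integral_abs_cosP_rpow_of_le hp ⟨hz0, hzc⟩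
  have hπ : piP p = 2 * (piP p / 2) := by ring
  rw [integral_eq_two_mul_sub_of_symm hzc.le (by linarith) (intervalIntegrable_abs_cosP_rpow hp)
      fun t ht => by rw [← hπ, cosP_piP_sub ht.1, abs_neg], ← hπ,
    integral_abs_cosP_rpow_of_le hp (z := piP p - z) ⟨by linarith, by linarith⟩,
    integral_abs_cosP_rpow_of_le hp (z := piP p / 2) ⟨by linarith [piP_pos hp], le_rfl⟩,
    cosP_piP_sub hzc, sinP_piP_sub hzc, cosP_piP_div_two hp, abs_neg]
  ring
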